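/- arXiv:2012.13642 — 3 statements merged into one kernel-verified Lean document; each statement's English description precedes it below -/
import Mathlib

section
/- Let Γonbe a nontrivial strongly regular graph on Fin v with parameters (v,k,λ,μ), let r, s ∈ ℤ with r > s, r + s = (λ : ℤ) − μ and r·s = (μ : ℤ) − k, and let f, g ∈ ℕ satisfy f + g = v − 1 and f·r + g·s = −(k : ℤ), with f ≠ g. Let p be an odd prime dividing (v : ℤ) − 4k + 2λ + 2μ, let Σ ∈ ℤ^{v×v} be the Seidel matrix of Γ, and let d be the rank over ZMod p of the reduction of G = Σ + (2r+1)·I modulo p. Then: (c) if (r : ZMod p) = (s : ZMod p), then d ≤ min{f + 1, g + 1}; (d) if m ∈ ℕ is such that p^m divides v but p^{m+1} does not divide v, and p^{m+1} divides (v : ℤ) − 2k + 2r, then d ≤ g. -/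
open Matrix

/-- The Seidel adjacency matrix `Σ = J - 2A - I` of a simple graph, over a ring `R`. -/
def seidel {v : ℕ} (R : Type*) [Ring R] (Γ : SimpleGraph (Fin v)) [DecidableRel Γ.Adj] :
    Matrix (Fin v) (Fin v) R :=
  Matrix.of (fun _ _ => (1 : R)) - 2 • Γ.adjMatrix R - 1



section AuxRank

variable {n : ℕ}

/-- Reduction of an integer matrix mod `p` has rank at most its rational rank. -/
lemma rank_map_zmod_le (p : ℕ) [Fact p.Prime] (W : Matrix (Fin n) (Fin n) ℤ) :
    (W.map (Int.cast : ℤ → ZMod p)).rank ≤ (W.map (Int.cast : ℤ → ℚ)).rank := by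
  classical
  -- the ℤ-linear cast maps
  let π : (Fin n → ℤ) →ₗ[ℤ] (Fin n → ZMod p) :=
    LinearMap.pi fun i => ((Int.castRingHom (ZMod p)).toAddMonoidHom.toIntLinearMap).comp
      (LinearMap.proj i)
  let ι : (Fin n → ℤ) →ₗ[ℤ] (Fin n → ℚ) :=
    LinearMap.pi fun i => ((Int.castRingHom ℚ).toAddMonoidHom.toIntLinearMap).comp
      (LinearMap.proj i)
  have hπ : ∀ x : Fin n → ℤ, π x = fun i => ((x i : ℤ) : ZMod p) := fun _ => rfl
  have hι : ∀ x : Fin n → ℤ, ι x = fun i => ((x i : ℤ) : ℚ) := fun _ => rfl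
  have hιinj : Function.Injective ι := by
    intro x y hxy
    rw [hι x, hι y] at hxy
    funext i
    have := congrFun hxy i
    exact_mod_cast this
  obtain ⟨d, bN⟩ := Submodule.basisOfPid (Pi.basisFun ℤ (Fin n))
    (LinearMap.range W.mulVecLin)
  have h1 : (W.map (Int.cast : ℤ → ZMod p)).rank ≤ d := by
    have hle : LinearMap.range (W.map (Int.cast : ℤ → ZMod p)).mulVecLin ≤
        Submodule.span (ZMod p) (Set.range fun i => π (bN i : Fin n → ℤ)) := by
      rintro _ ⟨x, rfl⟩
      have hsur : ∀ i, ∃ z : ℤ, (z : ZMod p) = x i := fun i => ZMod.intCast_surjective _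
      choose x' hx' using hsur
      have hxx : (W.map (Int.cast : ℤ → ZMod p)).mulVecLin x = π (W *ᵥ x') := by
        rw [hπ]
        funext i
        rw [Matrix.mulVecLin_apply]
        have := (RingHom.map_mulVec (Int.castRingHom (ZMod p)) W x' i).symm
        simp only [Int.coe_castRingHom] at this ⊢
        rw [← this]
        congr 1
        funext j
        simp [Function.comp, hx']
      rw [hxx]
      have hmem : W *ᵥ x' ∈ LinearMap.range W.mulVecLin := ⟨x', rfl⟩
      set z : LinearMap.range W.mulVecLin := ⟨W *ᵥ x', hmem⟩ with hz
      have hrepr : (z : Fin n → ℤ) = ∑ i, bN.repr z i • (bN i : Fin n → ℤ) := by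
        conv_lhs => rw [← bN.sum_repr z]
        push_cast
        rfl
      have : π (z : Fin n → ℤ) = ∑ i, ((bN.repr z i : ℤ) : ZMod p) • π (bN i : Fin n → ℤ) := by
        rw [hrepr, map_sum]
        refine Finset.sum_congr rfl fun i _ => ?_
        rw [LinearMap.map_smul, Int.cast_smul_eq_zsmul]
      rw [show π (W *ᵥ x') = π (z : Fin n → ℤ) from rfl, this]
      exact Submodule.sum_smul_mem _ _ fun i _ =>
        Submodule.subset_span (Set.mem_range_self i)
    calc (W.map (Int.cast : ℤ → ZMod p)).rank
        ≤ Module.finrank (ZMod p)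
          (Submodule.span (ZMod p) (Set.range fun i => π (bN i : Fin n → ℤ))) :=
          Submodule.finrank_mono hle
      _ ≤ _ := by
          refine le_trans (finrank_span_le_card _) ?_
          rw [Set.toFinset_range]
          exact le_trans (Finset.card_image_le) (by simp)
  have h2 : d ≤ (W.map (Int.cast : ℤ → ℚ)).rank := by
    have hmem : ∀ i : Fin d, ι (bN i : Fin n → ℤ) ∈
        LinearMap.range (W.map (Int.cast : ℤ → ℚ)).mulVecLin := by
      intro i
      obtain ⟨x, hx⟩ := (bN i).2
      refine ⟨fun j => ((x j : ℤ) : ℚ), ?_⟩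
      rw [← hx, Matrix.mulVecLin_apply, Matrix.mulVecLin_apply, hι]
      funext j
      exact ((RingHom.map_mulVec (Int.castRingHom ℚ) W x j)).symm
    have hindZ : LinearIndependent ℤ (fun i : Fin d => ι (bN i : Fin n → ℤ)) := by
      have h0 : LinearIndependent ℤ (fun i : Fin d => (bN i : Fin n → ℤ)) :=
        bN.linearIndependent.map' (LinearMap.range W.mulVecLin).subtype
          (Submodule.ker_subtype _)
      exact h0.map' ι (LinearMap.ker_eq_bot.mpr hιinj)
    have hindQ : LinearIndependent ℚ (fun i : Fin d => ι (bN i : Fin n → ℤ)) :=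
      (LinearIndependent.iff_fractionRing ℤ ℚ).mp hindZ
    let y' : Fin d → ↥(LinearMap.range (W.map (Int.cast : ℤ → ℚ)).mulVecLin) :=
      fun i => ⟨ι (bN i : Fin n → ℤ), hmem i⟩
    have hind' : LinearIndependent ℚ y' := by
      apply LinearIndependent.of_comp
        (LinearMap.range (W.map (Int.cast : ℤ → ℚ)).mulVecLin).subtype
      exact hindQ
    simpa [Matrix.rank] using hind'.fintype_card_le_finrank
  exact le_trans h1 h2

end AuxRank



variable {n : ℕ}

/-- rank of a nonzero scalar multiple. -/
lemma rank_smul_eq {K : Type*} [Field K] [DecidableEq (Fin n)] {c : K} (hc : c ≠ 0)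
    (Q : Matrix (Fin n) (Fin n) K) : (c • Q).rank = Q.rank := by
  have h : c • Q = (c • (1 : Matrix (Fin n) (Fin n) K)) * Q := by
    rw [smul_mul_assoc, one_mul]
  rw [h]
  apply rank_mul_eq_right_of_isUnit_det
  rw [det_smul, det_one, mul_one]
  exact (isUnit_iff_ne_zero.mpr (pow_ne_zero _ hc))

/-- subadditivity of matrix rank over a field -/
lemma rank_add_le' {K : Type*} [Field K] (A B : Matrix (Fin n) (Fin n) K) :
    (A + B).rank ≤ A.rank + B.rank := by
  have h : LinearMap.range (A + B).mulVecLin ≤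
      LinearMap.range A.mulVecLin ⊔ LinearMap.range B.mulVecLin := by
    rintro _ ⟨x, rfl⟩
    rw [Matrix.mulVecLin_add]
    exact Submodule.add_mem_sup ⟨x, rfl⟩ ⟨x, rfl⟩
  exact le_trans (Submodule.finrank_mono h)
    (Submodule.finrank_add_le_finrank_add_finrank _ _)

/-- rank of a scalar multiple of the all-ones matrix is at most one. -/
lemma rank_smul_allOnes_le_one {K : Type*} [Field K] (c : K) :
    (c • (Matrix.of fun _ _ => (1 : K)) : Matrix (Fin n) (Fin n) K).rank ≤ 1 := by
  have h : (c • (Matrix.of fun _ _ => (1 : K)) : Matrix (Fin n) (Fin n) K) =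
      (Matrix.of fun _ _ => (1 : K) : Matrix (Fin n) (Fin 1) K) *
      (Matrix.of fun _ _ => c : Matrix (Fin 1) (Fin n) K) := by
    ext i j
    simp [Matrix.mul_apply]
  rw [h]
  refine le_trans (Matrix.rank_mul_le_left _ _) ?_
  simpa using Matrix.rank_le_card_width (Matrix.of fun _ _ => (1 : K) : Matrix (Fin n) (Fin 1) K)

/-- A matrix over ℚ satisfying `Q² = tQ` with `t ≠ 0` and trace `γ t` has rank `γ`. -/
lemma rank_eq_of_sq (Q : Matrix (Fin n) (Fin n) ℚ) (t : ℚ) (γ : ℕ)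
    (h2 : Q * Q = t • Q) (ht : t ≠ 0) (htr : Q.trace = γ * t) : Q.rank = γ := by
  classical
  set E : Matrix (Fin n) (Fin n) ℚ := t⁻¹ • Q with hEdef
  have hE : E * E = E := by
    rw [hEdef, smul_mul_assoc, mul_smul_comm, h2, smul_smul, smul_smul]
    congr 1
    field_simp
  have hQE : Q = (t • (1 : Matrix (Fin n) (Fin n) ℚ)) * E := by
    rw [smul_mul_assoc, one_mul, hEdef, smul_smul, mul_inv_cancel₀ ht, one_smul]
  have hrank : Q.rank = E.rank := by
    rw [hQE]
    apply rank_mul_eq_right_of_isUnit_det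
    rw [det_smul, det_one, mul_one]
    exact isUnit_iff_ne_zero.mpr (pow_ne_zero _ ht)
  set e := E.mulVecLin with he
  have hcomp : ∀ x, e (e x) = e x := by
    intro x
    have : e ∘ₗ e = e := by rw [he, ← Matrix.mulVecLin_mul, hE]
    exact congrFun (congrArg (fun f => f.toFun) this) x
  have hproj : LinearMap.IsProj (LinearMap.range e) e :=
    ⟨fun x => LinearMap.mem_range_self _ _, by rintro x ⟨y, rfl⟩; exact hcomp y⟩
  have htrace : LinearMap.trace ℚ (Fin n → ℚ) e = Module.finrank ℚ (LinearMap.range e) :=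
    hproj.trace
  have htrE : LinearMap.trace ℚ (Fin n → ℚ) e = E.trace := by
    rw [LinearMap.trace_eq_matrix_trace ℚ (Pi.basisFun ℚ (Fin n)),
      LinearMap.toMatrix_eq_toMatrix']
    congr 1
    rw [he, ← Matrix.toLin'_apply', LinearMap.toMatrix'_toLin']
  have hrankE : (E.rank : ℚ) = E.trace := by
    rw [Matrix.rank, ← he, ← htrace, htrE]
  have hEtr : E.trace = γ := by
    rw [hEdef, Matrix.trace_smul, htr, smul_eq_mul]
    field_simp
  rw [hrank]
  have : (E.rank : ℚ) = (γ : ℚ) := by rw [hrankE, hEtr]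
  exact_mod_cast this



section AuxMap

variable {n : ℕ} {K : Type*} [CommRing K]

lemma mapInt_smul (c : ℤ) (X : Matrix (Fin n) (Fin n) ℤ) :
    ((c • X).map (Int.cast : ℤ → K)) = (c : K) • X.map (Int.cast : ℤ → K) := by
  ext i j
  simp only [Matrix.map_apply, Matrix.smul_apply, smul_eq_mul]
  push_cast
  ring

lemma mapInt_sub (X Y : Matrix (Fin n) (Fin n) ℤ) :
    ((X - Y).map (Int.cast : ℤ → K)) = X.map (Int.cast : ℤ → K) - Y.map (Int.cast : ℤ → K) := by
  ext i j
  simp [Matrix.map_apply]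

lemma mapInt_mul (X Y : Matrix (Fin n) (Fin n) ℤ) :
    ((X * Y).map (Int.cast : ℤ → K)) = X.map (Int.cast : ℤ → K) * Y.map (Int.cast : ℤ → K) := by
  ext i j
  simp [Matrix.map_apply, Matrix.mul_apply]

lemma mapInt_trace (X : Matrix (Fin n) (Fin n) ℤ) :
    (X.map (Int.cast : ℤ → K)).trace = ((X.trace : ℤ) : K) := by
  simp [Matrix.trace, Matrix.map_apply, Matrix.diag]

end AuxMap

section Core

variable {n : ℕ}

lemma rank_map_le_of_sq (p : ℕ) [Fact p.Prime] (X : Matrix (Fin n) (Fin n) ℤ) (τ : ℤ) (γ : ℕ)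
    (h2 : X * X = τ • X) (hτ : τ ≠ 0) (htr : X.trace = γ * τ) :
    (X.map (Int.cast : ℤ → ZMod p)).rank ≤ γ ∧ (X.map (Int.cast : ℤ → ℚ)).rank = γ := by
  have hQ : (X.map (Int.cast : ℤ → ℚ)).rank = γ := by
    refine rank_eq_of_sq _ (τ : ℚ) γ ?_ (Int.cast_ne_zero.mpr hτ) ?_
    · rw [← mapInt_mul, h2, mapInt_smul]
    · rw [mapInt_trace, htr]; push_cast; ring
  exact ⟨(rank_map_zmod_le p X).trans hQ.le, hQ⟩

end Core


/-- Continuation of the centroidal symmetry theorem: with `Γ` a nontrivial `(v,k,λ,μ)`-SRG,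
`r > s` its restricted eigenvalues with multiplicities `f ≠ g`, `p` an odd prime dividing
`v - 4k + 2λ + 2μ`, and `d` the rank mod `p` of `G = Σ + (2r+1)I`: (c) if `r ≡ s (mod p)`
then `d ≤ min (f+1) (g+1)`; (d) if `p^m ∥ v` and `p^(m+1) ∣ v - 2k + 2r` then `d ≤ g`. -/
theorem stmt_14 (v k l m : ℕ) (Γ : SimpleGraph (Fin v)) [DecidableRel Γ.Adj]
    (hsrg : Γ.IsSRGWith v k l m) (hnc : Γ ≠ ⊤) (hne : Γ ≠ ⊥)
    (r s : ℤ) (hrs : s < r)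
    (hsum : r + s = (l : ℤ) - (m : ℤ)) (hprod : r * s = (m : ℤ) - (k : ℤ))
    (f g : ℕ) (hfg : f + g = v - 1)
    (hmult : (f : ℤ) * r + (g : ℤ) * s = -(k : ℤ)) (hfgne : f ≠ g)
    (p : ℕ) (hp : p.Prime) (hodd : Odd p)
    (hdvd : (p : ℤ) ∣ (v : ℤ) - 4 * (k : ℤ) + 2 * (l : ℤ) + 2 * (m : ℤ)) :
    ((r : ZMod p) = (s : ZMod p) →
      ((seidel ℤ Γ + (2 * r + 1) • 1).map (Int.cast : ℤ → ZMod p)).rank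
        ≤ min (f + 1) (g + 1)) ∧
    (∀ e : ℕ, p ^ e ∣ v → ¬ p ^ (e + 1) ∣ v →
      (p : ℤ) ^ (e + 1) ∣ (v : ℤ) - 2 * (k : ℤ) + 2 * r →
      ((seidel ℤ Γ + (2 * r + 1) • 1).map (Int.cast : ℤ → ZMod p)).rank ≤ g) := by
  classical
  haveI : Fact p.Prime := ⟨hp⟩
  -- v ≥ 2
  have hv2 : 2 ≤ v := by
    by_contra hlt
    push_neg at hlt
    apply hne
    ext a b
    simp only [SimpleGraph.bot_adj, iff_false]
    intro h
    have hab : a = b := by omega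
    exact Γ.irrefl (hab ▸ h)
  -- basic matrix identities
  have hcompl : Γᶜ.adjMatrix ℤ =
      (Matrix.of fun _ _ => (1:ℤ)) - 1 - Γ.adjMatrix ℤ := by
    ext i j
    by_cases h : i = j
    · subst h; simp
    · by_cases hadj : Γ.Adj i j
      · simp [hadj, h, Matrix.one_apply_ne h, SimpleGraph.compl_adj]
      · simp [hadj, h, Matrix.one_apply_ne h, SimpleGraph.compl_adj]
  have hA2 : Γ.adjMatrix ℤ * Γ.adjMatrix ℤ =
      (k:ℤ) • (1 : Matrix (Fin v) (Fin v) ℤ) + (l:ℤ) • Γ.adjMatrix ℤ +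
      (m:ℤ) • ((Matrix.of fun _ _ => (1:ℤ)) - 1 - Γ.adjMatrix ℤ) := by
    have h := hsrg.matrix_eq (α := ℤ)
    rw [hcompl, pow_two] at h
    rw [h]
    simp [Nat.cast_smul_eq_nsmul]
  have hAJ : Γ.adjMatrix ℤ * (Matrix.of fun _ _ => (1:ℤ)) =
      (k:ℤ) • (Matrix.of fun _ _ => (1:ℤ)) := by
    ext i j
    rw [SimpleGraph.adjMatrix_mul_apply]
    simp only [Matrix.of_apply, Matrix.smul_apply, smul_eq_mul, mul_one, Finset.sum_const,
      nsmul_eq_mul]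
    exact_mod_cast congrArg (Nat.cast : ℕ → ℤ) (hsrg.regular i)
  have hJA : (Matrix.of fun _ _ => (1:ℤ)) * Γ.adjMatrix ℤ =
      (k:ℤ) • (Matrix.of fun _ _ => (1:ℤ)) := by
    ext i j
    rw [SimpleGraph.mul_adjMatrix_apply]
    simp only [Matrix.of_apply, Matrix.smul_apply, smul_eq_mul, mul_one, Finset.sum_const,
      nsmul_eq_mul]
    exact_mod_cast congrArg (Nat.cast : ℕ → ℤ) (hsrg.regular j)
  have hJJ : (Matrix.of fun _ _ => (1:ℤ)) * (Matrix.of fun _ _ => (1:ℤ)) =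
      (v:ℤ) • (Matrix.of fun _ _ => (1:ℤ) : Matrix (Fin v) (Fin v) ℤ) := by
    ext i j
    simp [Matrix.mul_apply]
  have htrA : (Γ.adjMatrix ℤ).trace = 0 := Γ.trace_adjMatrix ℤ
  have htrJ : (Matrix.of fun _ _ => (1:ℤ) : Matrix (Fin v) (Fin v) ℤ).trace = (v:ℤ) := by
    simp [Matrix.trace, Matrix.diag]
  set A := Γ.adjMatrix ℤ with hA
  set Jm : Matrix (Fin v) (Fin v) ℤ := Matrix.of fun _ _ => (1:ℤ) with hJm
  -- scalar facts
  have hv1 : (v:ℤ) - 1 = (f:ℤ) + (g:ℤ) := by omega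
  set c : ℤ := (v:ℤ) - 4*(k:ℤ) + 2*(l:ℤ) + 2*(m:ℤ) with hc
  set al : ℤ := (v:ℤ) - 2*(k:ℤ) + 2*r with hal
  set be : ℤ := (v:ℤ) - 2*(k:ℤ) + 2*s with hbe
  have hbetal : be = al - 2*(r-s) := by rw [hal, hbe]; ring
  set M : Matrix (Fin v) (Fin v) ℤ := Jm - (2:ℤ) • A + (2*r) • 1 with hM
  set N : Matrix (Fin v) (Fin v) ℤ := Jm - (2:ℤ) • A + (2*s) • 1 with hN
  have hgoalM : seidel ℤ Γ + (2*r+1) • (1 : Matrix (Fin v) (Fin v) ℤ) = M := by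
    rw [hM]
    unfold seidel
    rw [← hJm, ← hA]
    have h2s : (2:ℕ) • A = (2:ℤ) • A := by rw [two_smul, two_smul]
    rw [h2s]
    module
  -- products
  have hM2 : M * M = c • Jm + (2*(r-s)) • M := by
    rw [hM, hc]
    simp only [sub_mul, mul_sub, add_mul, mul_add, smul_mul_assoc, mul_smul_comm, hA2, hAJ,
      hJA, hJJ, Matrix.mul_one, Matrix.one_mul, smul_smul, smul_add, smul_sub]
    match_scalars <;>
      first
        | ring1
        | linear_combination 2*hsum
        | linear_combination (-4)*hsum
        | linear_combination (-4)*hprod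
        | linear_combination 4*hsum
        | linear_combination 4*hprod
        | linear_combination 2*hsum + 4*hprod
        | linear_combination (-2)*hsum - 4*hprod
  have hN2 : N * N = c • Jm + (2*(s-r)) • N := by
    rw [hN, hc]
    simp only [sub_mul, mul_sub, add_mul, mul_add, smul_mul_assoc, mul_smul_comm, hA2, hAJ,
      hJA, hJJ, Matrix.mul_one, Matrix.one_mul, smul_smul, smul_add, smul_sub]
    match_scalars <;>
      first
        | ring1
        | linear_combination 2*hsum
        | linear_combination (-4)*hsum
        | linear_combination (-4)*hprod
        | linear_combination 4*hsum
        | linear_combination 4*hprod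
        | linear_combination 2*hsum + 4*hprod
        | linear_combination (-2)*hsum - 4*hprod
  have hMN : M * N = c • Jm := by
    rw [hM, hN, hc]
    simp only [sub_mul, mul_sub, add_mul, mul_add, smul_mul_assoc, mul_smul_comm, hA2, hAJ,
      hJA, hJJ, Matrix.mul_one, Matrix.one_mul, smul_smul, smul_add, smul_sub]
    match_scalars <;>
      first
        | ring1
        | linear_combination 2*hsum
        | linear_combination (-4)*hsum
        | linear_combination (-4)*hprod
        | linear_combination 4*hsum
        | linear_combination 4*hprod
        | linear_combination 2*hsum + 4*hprod
        | linear_combination (-2)*hsum - 4*hprod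
  have hMJ : M * Jm = al • Jm := by
    rw [hM, hal]
    simp only [sub_mul, add_mul, smul_mul_assoc, hAJ, hJJ, Matrix.one_mul, smul_smul]
    match_scalars <;> ring
  have hJM : Jm * M = al • Jm := by
    rw [hM, hal]
    simp only [mul_sub, mul_add, mul_smul_comm, hJA, hJJ, Matrix.mul_one, smul_smul]
    match_scalars <;> ring
  have hNJ : N * Jm = be • Jm := by
    rw [hN, hbe]
    simp only [sub_mul, add_mul, smul_mul_assoc, hAJ, hJJ, Matrix.one_mul, smul_smul]
    match_scalars <;> ring
  have hJN : Jm * N = be • Jm := by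
    rw [hN, hbe]
    simp only [mul_sub, mul_add, mul_smul_comm, hJA, hJJ, Matrix.mul_one, smul_smul]
    match_scalars <;> ring
  -- αβ = cv
  have hab : al * be = c * (v:ℤ) := by
    have h1 : (Jm * M) * N = (al * be) • Jm := by
      rw [hJM, smul_mul_assoc, hJN, smul_smul]
    have h2 : Jm * (M * N) = (c * (v:ℤ)) • Jm := by
      rw [hMN, mul_smul_comm, hJJ, smul_smul, mul_comm]
    have h3 : (al * be) • Jm = (c * (v:ℤ)) • Jm := by rw [← h1, mul_assoc, h2]
    have i0 : Fin v := ⟨0, by omega⟩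
    have h4 := congrFun (congrFun h3 i0) i0
    simpa [hJm] using h4
  -- multiplicity identities
  have hgv : (v:ℤ) + 2*r*(v:ℤ) - al = 2*(g:ℤ)*(r-s) := by
    rw [hal]; linear_combination 2*r*hv1 + 2*hmult
  have hfv : (v:ℤ) + 2*s*(v:ℤ) - be = 2*(f:ℤ)*(s-r) := by
    rw [hbe]; linear_combination 2*s*hv1 + 2*hmult
  -- traces
  have htrM : M.trace = (v:ℤ) + 2*r*(v:ℤ) := by
    rw [hM]
    rw [Matrix.trace_add, Matrix.trace_sub, Matrix.trace_smul, Matrix.trace_smul, htrA, htrJ,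
      Matrix.trace_one]
    simp
    try ring
  have htrN : N.trace = (v:ℤ) + 2*s*(v:ℤ) := by
    rw [hN]
    rw [Matrix.trace_add, Matrix.trace_sub, Matrix.trace_smul, Matrix.trace_smul, htrA, htrJ,
      Matrix.trace_one]
    simp
    try ring
  -- the key expansion lemma
  have key2 : ∀ (P : Matrix (Fin v) (Fin v) ℤ) (δ cP aP : ℤ),
      P * P = cP • Jm + δ • P → P * Jm = aP • Jm → Jm * P = aP • Jm →
      ∀ x y : ℤ, x*x*cP - 2*(x*y)*aP + y*y*(v:ℤ) + δ*(x*y) = 0 →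
      (x • P - y • Jm) * (x • P - y • Jm) = (δ*x) • (x • P - y • Jm) := by
    intro P δ cP aP hP2 hPJ hJP x y hxy
    simp only [sub_mul, mul_sub, smul_mul_assoc, mul_smul_comm, hP2, hPJ, hJP, hJJ,
      smul_smul, smul_add, smul_sub]
    match_scalars <;> first | ring1 | linear_combination hxy | linear_combination (-1:ℤ)*hxy
  have trkey : ∀ (P : Matrix (Fin v) (Fin v) ℤ) (x y : ℤ),
      (x • P - y • Jm).trace = x * P.trace - y * (v:ℤ) := by
    intro P x y
    rw [Matrix.trace_sub, Matrix.trace_smul, Matrix.trace_smul, htrJ]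
    simp
  have hv0 : ((v:ℤ) : ℚ) ≠ 0 := by
    simp only [Int.cast_natCast, ne_eq, Nat.cast_eq_zero]
    omega
  have hvz : (v:ℤ) ≠ 0 := by omega
  have hrsz : r - s ≠ 0 := sub_ne_zero.mpr (ne_of_gt hrs)
  -- M-side: X = v•M - al•Jm
  have condM : (v:ℤ)*(v:ℤ)*c - 2*((v:ℤ)*al)*al + al*al*(v:ℤ) + (2*(r-s))*((v:ℤ)*al) = 0 := by
    linear_combination (-(v:ℤ))*hab + (v:ℤ)*al*hbetal
  have hX2 := key2 M (2*(r-s)) c al hM2 hMJ hJM (v:ℤ) al condM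
  have hXtr : ((v:ℤ) • M - al • Jm).trace = (g:ℤ) * (2*(r-s)*(v:ℤ)) := by
    rw [trkey, htrM]
    linear_combination (v:ℤ)*hgv
  have hτM : 2*(r-s)*(v:ℤ) ≠ 0 := by
    exact mul_ne_zero (mul_ne_zero two_ne_zero hrsz) hvz
  have hX2' : ((v:ℤ) • M - al • Jm) * ((v:ℤ) • M - al • Jm) =
      (2*(r-s)*(v:ℤ)) • ((v:ℤ) • M - al • Jm) := by
    exact hX2
  obtain ⟨hXp, hXq⟩ := rank_map_le_of_sq p ((v:ℤ) • M - al • Jm) (2*(r-s)*(v:ℤ)) g hX2' hτM hXtr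
  -- rank over ℚ of M is at most g+1
  have hMq : (M.map (Int.cast : ℤ → ℚ)).rank ≤ g + 1 := by
    have hdec : ((v:ℤ) : ℚ) • M.map (Int.cast : ℤ → ℚ) =
        ((v:ℤ) • M - al • Jm).map (Int.cast : ℤ → ℚ) +
          (al : ℚ) • Jm.map (Int.cast : ℤ → ℚ) := by
      rw [mapInt_sub, mapInt_smul, mapInt_smul]
      abel
    have h1 : (M.map (Int.cast : ℤ → ℚ)).rank =
        (((v:ℤ) : ℚ) • M.map (Int.cast : ℤ → ℚ)).rank := (rank_smul_eq hv0 _).symm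
    rw [h1, hdec]
    refine le_trans (rank_add_le' _ _) ?_
    have hJQ : Jm.map (Int.cast : ℤ → ℚ) = Matrix.of fun _ _ => (1:ℚ) := by
      ext i j; simp [hJm, Matrix.map_apply]
    rw [hXq, hJQ]
    exact Nat.add_le_add_left (rank_smul_allOnes_le_one _) g
  -- N-side
  have condN : (v:ℤ)*(v:ℤ)*c - 2*((v:ℤ)*be)*be + be*be*(v:ℤ) + (2*(s-r))*((v:ℤ)*be) = 0 := by
    linear_combination (-(v:ℤ))*hab + (-(v:ℤ))*be*hbetal
  have hY2 := key2 N (2*(s-r)) c be hN2 hNJ hJN (v:ℤ) be condN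
  have hYtr : ((v:ℤ) • N - be • Jm).trace = (f:ℤ) * (2*(s-r)*(v:ℤ)) := by
    rw [trkey, htrN]
    linear_combination (v:ℤ)*hfv
  have hτN : 2*(s-r)*(v:ℤ) ≠ 0 := by
    refine mul_ne_zero (mul_ne_zero two_ne_zero ?_) hvz
    intro h0
    exact hrsz (by linarith)
  have hY2' : ((v:ℤ) • N - be • Jm) * ((v:ℤ) • N - be • Jm) =
      (2*(s-r)*(v:ℤ)) • ((v:ℤ) • N - be • Jm) := by
    exact hY2
  obtain ⟨hYp, hYq⟩ := rank_map_le_of_sq p ((v:ℤ) • N - be • Jm) (2*(s-r)*(v:ℤ)) f hY2' hτN hYtr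
  have hNq : (N.map (Int.cast : ℤ → ℚ)).rank ≤ f + 1 := by
    have hdec : ((v:ℤ) : ℚ) • N.map (Int.cast : ℤ → ℚ) =
        ((v:ℤ) • N - be • Jm).map (Int.cast : ℤ → ℚ) +
          (be : ℚ) • Jm.map (Int.cast : ℤ → ℚ) := by
      rw [mapInt_sub, mapInt_smul, mapInt_smul]
      abel
    have h1 : (N.map (Int.cast : ℤ → ℚ)).rank =
        (((v:ℤ) : ℚ) • N.map (Int.cast : ℤ → ℚ)).rank := (rank_smul_eq hv0 _).symm
    rw [h1, hdec]
    refine le_trans (rank_add_le' _ _) ?_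
    have hJQ : Jm.map (Int.cast : ℤ → ℚ) = Matrix.of fun _ _ => (1:ℚ) := by
      ext i j; simp [hJm, Matrix.map_apply]
    rw [hYq, hJQ]
    exact Nat.add_le_add_left (rank_smul_allOnes_le_one _) f
  rw [hgoalM]
  constructor
  · -- part (c)
    intro hcast
    have hMp : (M.map (Int.cast : ℤ → ZMod p)).rank ≤ g + 1 :=
      le_trans (rank_map_zmod_le p M) hMq
    have hNp : (N.map (Int.cast : ℤ → ZMod p)).rank ≤ f + 1 :=
      le_trans (rank_map_zmod_le p N) hNq
    have hMNsub : M - N = (2*(r-s)) • (1 : Matrix (Fin v) (Fin v) ℤ) := by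
      rw [hM, hN]; module
    have hMN0 : M.map (Int.cast : ℤ → ZMod p) = N.map (Int.cast : ℤ → ZMod p) := by
      have h0 : (M - N).map (Int.cast : ℤ → ZMod p) = 0 := by
        rw [hMNsub, show ((2*(r-s)) • (1 : Matrix (Fin v) (Fin v) ℤ)) =
          (2*(r-s)) • (1 : Matrix (Fin v) (Fin v) ℤ) from rfl, mapInt_smul]
        have : ((2*(r-s) : ℤ) : ZMod p) = 0 := by
          push_cast
          rw [hcast]
          ring
        rw [this, zero_smul]
      have h1 := mapInt_sub (K := ZMod p) M N
      rw [h0] at h1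
      exact sub_eq_zero.mp h1.symm
    exact le_min (by rw [hMN0]; exact hNp) hMp
  · -- part (d)
    intro e he1 he2 he3
    obtain ⟨u, hu⟩ := he1
    obtain ⟨a, ha⟩ := he3
    have haa : al = (p:ℤ)^(e+1) * a := by rw [hal]; exact ha
    have hVu : (v:ℤ) = (p:ℤ)^e * (u:ℤ) := by exact_mod_cast hu
    have hpu : ¬ (p ∣ u) := by
      intro hd
      obtain ⟨w, hw⟩ := hd
      exact he2 ⟨w, by rw [hu, hw]; ring⟩
    have hu0 : u ≠ 0 := by
      rintro rfl
      rw [mul_zero] at hu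
      omega
    have hp0 : (p:ℤ) ≠ 0 := by exact_mod_cast hp.ne_zero
    have cond' : (u:ℤ)*(u:ℤ)*c - 2*((u:ℤ)*((p:ℤ)*a))*al + ((p:ℤ)*a)*((p:ℤ)*a)*(v:ℤ) +
        (2*(r-s))*((u:ℤ)*((p:ℤ)*a)) = 0 := by
      have cond2 := condM
      rw [haa, hVu] at cond2
      rw [haa, hVu]
      refine mul_left_cancel₀ (a := (p:ℤ)^e * (p:ℤ)^e)
        (mul_ne_zero (pow_ne_zero _ hp0) (pow_ne_zero _ hp0)) ?_
      rw [mul_zero]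
      linear_combination cond2
    have hW2 := key2 M (2*(r-s)) c al hM2 hMJ hJM (u:ℤ) ((p:ℤ)*a) cond'
    have hW2' : ((u:ℤ) • M - ((p:ℤ)*a) • Jm) * ((u:ℤ) • M - ((p:ℤ)*a) • Jm) =
        (2*(r-s)*(u:ℤ)) • ((u:ℤ) • M - ((p:ℤ)*a) • Jm) := by
      exact hW2
    have hWtr : ((u:ℤ) • M - ((p:ℤ)*a) • Jm).trace = (g:ℤ) * (2*(r-s)*(u:ℤ)) := by
      rw [trkey, htrM]
      have hgv2 := hgv
      rw [haa, hVu] at hgv2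
      rw [hVu]
      linear_combination (u:ℤ) * hgv2
    have hτW : 2*(r-s)*(u:ℤ) ≠ 0 := by
      refine mul_ne_zero (mul_ne_zero two_ne_zero hrsz) ?_
      exact_mod_cast hu0
    obtain ⟨hWp, _⟩ := rank_map_le_of_sq p ((u:ℤ) • M - ((p:ℤ)*a) • Jm) (2*(r-s)*(u:ℤ)) g
      hW2' hτW hWtr
    have hmap : ((u:ℤ) • M - ((p:ℤ)*a) • Jm).map (Int.cast : ℤ → ZMod p) =
        (((u:ℤ) : ZMod p)) • M.map (Int.cast : ℤ → ZMod p) := by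
      rw [mapInt_sub, mapInt_smul, mapInt_smul]
      have : (((p:ℤ)*a : ℤ) : ZMod p) = 0 := by
        push_cast
        rw [ZMod.natCast_self]
        ring
      rw [this, zero_smul, sub_zero]
    have hune : (((u:ℤ)) : ZMod p) ≠ 0 := by
      rw [Int.cast_natCast, Ne, ZMod.natCast_eq_zero_iff]
      exact hpu
    calc (M.map (Int.cast : ℤ → ZMod p)).rank
        = ((((u:ℤ)) : ZMod p) • M.map (Int.cast : ℤ → ZMod p)).rank :=
          (rank_smul_eq hune _).symm
      _ = (((u:ℤ) • M - ((p:ℤ)*a) • Jm).map (Int.cast : ℤ → ZMod p)).rank := by rw [hmap]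
      _ ≤ g := hWp
end

section
/- For every integer d > 1 and every odd prime p that divides d − 7 in ℤ (in particular, for every odd prime p when d = 7), there exists a symmetric matrix G over ZMod p of size n×n, where n = d(d+1)/2 = binom(d+1, 2), such that G_{ii} = 3 for every i, (G_{ij})² = 1 for all i ≠ j, G² = 12·G, and rank G = d. That is, a (3,1,12)-equiangular tight frame of n = binom(d+1,2) vectors exists in a d-dimensional orthogonal geometry over 𝔽_p, attaining Gerzon's bound n = binom(d+1,2). -/
/-! Index by the 2-subsets `s` of a set of size `d + 1` and let `M` be the incidence matrix.
The matrix `G s t = 2 #(s ∩ t) - 1` factors as `4 G = M K Mᵀ` with `K = 8 I - J`.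
When `d + 1 = 8` in `𝔽_p`, `K J = 0`, so `K² = 8 K`, and `MᵀM = (d - 1) I + J`; hence
`16 G² = M (K MᵀM K) Mᵀ = 48 M K Mᵀ = 192 G`. In odd characteristic `M` is injective
(over a triangle `a, b, c` the equations `x_a + x_b = x_a + x_c = x_b + x_c = 0` force
`2 x_a = 0`), so `rank G = rank K`, and `rank K = d` because `K + J = 8 I` and `K J = 0`. -/

open Matrix Finset

namespace Matrix

variable {m n o R F : Type*}

def allOnes (n R : Type*) [One R] : Matrix n n R := of fun _ _ => 1

@[simp] theorem allOnes_apply [One R] (i j : n) : allOnes n R i j = 1 := rfl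

theorem allOnes_eq_vecMulVec [MulOneClass R] : allOnes n R = vecMulVec 1 1 := by
  ext; simp [vecMulVec]

variable [Fintype n]

theorem allOnes_mul_allOnes [NonAssocSemiring R] :
    allOnes n R * allOnes n R = (Fintype.card n : R) • allOnes n R := by
  ext; simp [mul_apply]

section SmulOneSubAllOnes

variable [DecidableEq n] [CommRing R] {c : R}

theorem smul_one_sub_allOnes_mul_allOnes (hc : (Fintype.card n : R) = c) :
    (c • 1 - allOnes n R) * allOnes n R = 0 := by
  rw [Matrix.sub_mul, allOnes_mul_allOnes, smul_mul, Matrix.one_mul, hc, sub_self]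

theorem smul_one_sub_allOnes_mul_self (hc : (Fintype.card n : R) = c) :
    (c • 1 - allOnes n R) * (c • 1 - allOnes n R) = c • (c • 1 - allOnes n R) := by
  rw [Matrix.mul_sub, smul_one_sub_allOnes_mul_allOnes hc, sub_zero, Matrix.mul_smul,
    Matrix.mul_one]

end SmulOneSubAllOnes

variable [Field F]

theorem rank_add_le (A B : Matrix m n F) : (A + B).rank ≤ A.rank + B.rank := by
  rw [rank, rank, rank, mulVecLin_add]
  exact (Submodule.finrank_mono (LinearMap.range_add_le _ _)).trans
    (Submodule.finrank_add_le_finrank_add_finrank _ _)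

theorem rank_mul_eq_right_of_mulVec_injective [Fintype o] {A : Matrix m n F}
    (hA : Function.Injective A.mulVec) (B : Matrix n o F) : (A * B).rank = B.rank := by
  rw [rank, rank, mulVecLin_mul, LinearMap.range_comp,
    ← (Submodule.equivMapOfInjective A.mulVecLin hA _).finrank_eq]

theorem rank_allOnes [Nonempty n] : (allOnes n F).rank = 1 := by
  refine le_antisymm ?_ ?_
  · exact allOnes_eq_vecMulVec (R := F) ▸ rank_vecMulVec_le _ _
  · obtain ⟨i⟩ := ‹Nonempty n›
    calc 1 = ((allOnes n F).submatrix (fun _ : Unit => i) (fun _ : Unit => i)).rank := by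
          rw [show (allOnes n F).submatrix _ _ = 1 by ext; simp, rank_one, Fintype.card_unit]
      _ ≤ (allOnes n F).rank := rank_submatrix_le _ _ _

theorem rank_smul_one_sub_allOnes [DecidableEq n] {c : F} (hc : (Fintype.card n : F) = c)
    (hc0 : c ≠ 0) : (c • 1 - allOnes n F).rank = Fintype.card n - 1 := by
  have : Nonempty n := by
    rw [← Fintype.card_pos_iff, Nat.pos_iff_ne_zero]
    rintro h
    simp [h, eq_comm, hc0] at hc
  have hle := rank_add_rank_le_card_of_mul_eq_zero (smul_one_sub_allOnes_mul_allOnes hc)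
  have hge : Fintype.card n ≤ (c • 1 - allOnes n F).rank + (allOnes n F).rank :=
    calc Fintype.card n = (c • 1 - allOnes n F + allOnes n F).rank := by
          rw [sub_add_cancel, rank_smul_of_mem_nonZeroDivisors _
            (mem_nonZeroDivisors_of_ne_zero hc0), rank_one]
      _ ≤ _ := rank_add_le _ _
  rw [rank_allOnes] at hle hge
  omega

end Matrix

abbrev TwoSubsets (α : Type*) := {s : Finset α // #s = 2}

namespace TwoSubsets

variable {α R F : Type*} [DecidableEq α]

def incidence (α R : Type*) [DecidableEq α] [Zero R] [One R] : Matrix (TwoSubsets α) α R :=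
  of fun s a => if a ∈ s.1 then 1 else 0

def etfGram (α R : Type*) [DecidableEq α] [Ring R] : Matrix (TwoSubsets α) (TwoSubsets α) R :=
  of fun s t => 2 * #(s.1 ∩ t.1) - 1

theorem card_inter_lt_two {s t : TwoSubsets α} (h : s ≠ t) : #(s.1 ∩ t.1) < 2 := by
  by_contra! h2
  have hs := eq_of_subset_of_card_le inter_subset_left (s.2.trans_le h2)
  have ht := eq_of_subset_of_card_le inter_subset_right (t.2.trans_le h2)
  exact h (Subtype.ext (hs.symm.trans ht))

section CommRing

variable [CommRing R]

theorem etfGram_isSymm : (etfGram α R).IsSymm := by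
  ext s t
  simp [etfGram, inter_comm]

theorem etfGram_apply_self (s : TwoSubsets α) : etfGram α R s s = 3 := by
  simp only [etfGram, of_apply, inter_self, s.2]
  norm_num

theorem etfGram_apply_sq_of_ne {s t : TwoSubsets α} (h : s ≠ t) : etfGram α R s t ^ 2 = 1 := by
  have := card_inter_lt_two h
  interval_cases hst : #(s.1 ∩ t.1) <;> norm_num [etfGram, hst]

variable [Fintype α]

theorem card_filter_subset (u : Finset α) (hu : #u ≤ 2) :
    #{s : TwoSubsets α | u ⊆ s.1} = (Fintype.card α - #u).choose (2 - #u) := by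
  rw [← card_univ, ← card_filter_powersetCard_subset u univ 2 (subset_univ u) hu,
    ← card_map (Function.Embedding.subtype _)]
  congr 1
  ext s
  simp [and_comm]

theorem incidence_mul_mul_transpose_apply (X : Matrix α α R) (s t : TwoSubsets α) :
    (incidence α R * X * (incidence α R)ᵀ) s t = ∑ a ∈ s.1, ∑ b ∈ t.1, X a b := by
  simp [incidence, mul_apply]
  exact sum_comm

theorem four_smul_etfGram :
    (4 : R) • etfGram α R = incidence α R * ((8 : R) • 1 - allOnes α R) * (incidence α R)ᵀ := by
  ext s t
  rw [incidence_mul_mul_transpose_apply]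
  simp [etfGram, one_apply, sum_sub_distrib, s.2, t.2]
  ring

theorem transpose_incidence_mul_incidence :
    (incidence α R)ᵀ * incidence α R = ((Fintype.card α : R) - 2) • 1 + allOnes α R := by
  ext a b
  have hcount : ((incidence α R)ᵀ * incidence α R) a b = #{s : TwoSubsets α | {a, b} ⊆ s.1} := by
    simp [incidence, mul_apply, ← ite_and, insert_subset_iff, sum_boole, and_comm]
  rw [hcount, card_filter_subset _ card_le_two]
  rcases eq_or_ne a b with rfl | hab
  · have := Fintype.card_pos_iff.2 ⟨a⟩
    simp [Nat.cast_sub this]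
    ring
  · simp [hab, card_pair hab]

theorem incidence_mulVec_pair (x : α → R) {a b : α} (hab : a ≠ b) :
    (incidence α R *ᵥ x) ⟨{a, b}, card_pair hab⟩ = x a + x b := by
  simp only [mulVec, dotProduct, incidence, of_apply, ite_mul, one_mul, zero_mul]
  rw [sum_ite_mem, univ_inter, sum_pair hab]

end CommRing

variable [Fintype α] [Field F]

theorem incidence_mulVec_injective (h2 : (2 : F) ≠ 0) (h3 : 3 ≤ Fintype.card α) :
    Function.Injective (incidence α F).mulVec := by
  refine (injective_iff_map_eq_zero (incidence α F).mulVecLin).2 fun x hx => funext fun a => ?_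
  obtain ⟨b, hb, c, hc, hbc⟩ := one_lt_card.1 (show 1 < #(univ.erase a) by
    rw [card_erase_of_mem (mem_univ a), card_univ]; omega)
  rw [mem_erase] at hb hc
  have hsum (u v : α) (huv : u ≠ v) : x u + x v = 0 := by
    rw [← incidence_mulVec_pair x huv]
    exact congrFun hx _
  have : (2 : F) * x a = 0 := by
    linear_combination hsum a b hb.1.symm + hsum a c hc.1.symm - hsum b c hbc
  simpa [h2] using this

theorem etfGram_mul_self (h2 : (2 : F) ≠ 0) (hN : (Fintype.card α : F) = 8) :
    etfGram α F * etfGram α F = (12 : F) • etfGram α F := by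
  have h4G := four_smul_etfGram (α := α) (R := F)
  set M := incidence α F
  set K := (8 : F) • 1 - allOnes α F
  have hKMMK : K * (Mᵀ * M) * K = (48 : F) • K := by
    rw [transpose_incidence_mul_incidence, hN, Matrix.mul_add, Matrix.add_mul,
      smul_one_sub_allOnes_mul_allOnes hN, Matrix.zero_mul, add_zero, Matrix.mul_smul,
      Matrix.mul_one, Matrix.smul_mul, smul_one_sub_allOnes_mul_self hN, smul_smul]
    norm_num [K]
  have h16 : (16 : F) • (etfGram α F * etfGram α F) = (16 : F) • ((12 : F) • etfGram α F) :=
    calc (16 : F) • (etfGram α F * etfGram α F)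
        = ((4 : F) • etfGram α F) * ((4 : F) • etfGram α F) := by
          rw [smul_mul_smul_comm]; norm_num
      _ = M * (K * (Mᵀ * M) * K) * Mᵀ := by
          rw [h4G]; simp only [Matrix.mul_assoc]
      _ = (16 : F) • ((12 : F) • etfGram α F) := by
          rw [hKMMK, Matrix.mul_smul, Matrix.smul_mul, ← h4G, smul_smul,
            smul_smul]
          norm_num
  have h16ne : (16 : F) ≠ 0 := by
    simpa [show (16 : F) = 2 ^ 4 by norm_num] using pow_ne_zero 4 h2
  exact smul_right_injective _ h16ne h16

theorem rank_etfGram (h2 : (2 : F) ≠ 0) (hN : (Fintype.card α : F) = 8)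
    (h3 : 3 ≤ Fintype.card α) : (etfGram α F).rank = Fintype.card α - 1 := by
  have h4 : (4 : F) ≠ 0 := by simpa [show (4 : F) = 2 ^ 2 by norm_num] using pow_ne_zero 2 h2
  have h8 : (8 : F) ≠ 0 := by simpa [show (8 : F) = 2 ^ 3 by norm_num] using pow_ne_zero 3 h2
  have hM := incidence_mulVec_injective h2 h3
  rw [← rank_smul_of_mem_nonZeroDivisors _ (mem_nonZeroDivisors_of_ne_zero h4),
    four_smul_etfGram, Matrix.mul_assoc, rank_mul_eq_right_of_mulVec_injective hM,
    ← rank_transpose, transpose_mul, transpose_transpose,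
    rank_mul_eq_right_of_mulVec_injective hM, rank_transpose, rank_smul_one_sub_allOnes hN h8]

end TwoSubsets

open TwoSubsets in
/-- For every integer `d > 1` and every odd prime `p` dividing `d - 7`, Gerzon's bound is
attained over `𝔽_p`: there is a `(3,1,12)`-ETF Gram matrix of size `n × n`,
`n = (d+1 choose 2) = d(d+1)/2`, of rank `d` over `ZMod p`. -/
theorem stmt_15 (d : ℕ) (hd : 1 < d) (p : ℕ) (hp : p.Prime) (hodd : Odd p)
    (hdvd : (p : ℤ) ∣ (d : ℤ) - 7) :
    ∃ G : Matrix (Fin ((d + 1).choose 2)) (Fin ((d + 1).choose 2)) (ZMod p),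
      G.IsSymm ∧ (∀ i, G i i = 3) ∧ (∀ i j, i ≠ j → (G i j) ^ 2 = 1) ∧
      G * G = (12 : ZMod p) • G ∧ G.rank = d := by
  have := Fact.mk hp
  have h2 : (2 : ZMod p) ≠ 0 := by
    intro h
    have : p ∣ 2 := (ZMod.natCast_eq_zero_iff 2 p).1 (by exact_mod_cast h)
    rw [Nat.prime_dvd_prime_iff_eq hp Nat.prime_two] at this
    exact Nat.not_odd_iff_even.2 (this ▸ even_two) hodd
  have hN : (Fintype.card (Fin (d + 1)) : ZMod p) = 8 := by
    have := (ZMod.intCast_zmod_eq_zero_iff_dvd _ p).2 hdvd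
    push_cast at this
    rw [Fintype.card_fin]; push_cast
    linear_combination this
  have h3 : 3 ≤ Fintype.card (Fin (d + 1)) := by rw [Fintype.card_fin]; omega
  let e : Fin ((d + 1).choose 2) ≃ TwoSubsets (Fin (d + 1)) :=
    (Fintype.equivFinOfCardEq (by simp)).symm
  refine ⟨(etfGram (Fin (d + 1)) (ZMod p)).submatrix e e, etfGram_isSymm.submatrix e,
    fun i => etfGram_apply_self (e i), fun i j hij => etfGram_apply_sq_of_ne (e.injective.ne hij),
    ?_, ?_⟩
  · rw [submatrix_mul_equiv, etfGram_mul_self h2 hN]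
    rfl
  · rw [rank_submatrix, rank_etfGram h2 hN h3, Fintype.card_fin, Nat.add_sub_cancel]
end

section
/- Let p be an odd prime and m ≥ 4 an integer with m ≡ 4 (mod p). Then there exists a matrix Φ over ZMod p with m(m−1)/2 rows and m² columns such that Φ·Φᵀ = 8·I, every diagonal entry of Φᵀ·Φ equals 3, every off-diagonal entry of Φᵀ·Φ squares to 1, and rank Φ = m(m−1)/2. That is, there is a (3,1,8)-equiangular tight frame of size (m(m−1)/2) × m² in the real model on 𝔽_p^{m(m−1)/2}, the orthogonal geometry given by the form ⟨x,y⟩ = xᵀy. -/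
open Matrix Finset

namespace Stmt19Aux

/-- Entry of the "Hadamard-like" matrix `H = J - 2I` over `ZMod p`. -/
def hent {m : ℕ} (p : ℕ) (a b : Fin m) : ZMod p := if a = b then -1 else 1

/-- The Steiner ETF synthesis matrix (before restricting rows to unordered pairs):
row indexed by a pair `(i,j)` (representing the edge `{i,j}`), column by `(v,t)`. -/
def phi0 (p m : ℕ) : Matrix (Fin m × Fin m) (Fin m × Fin m) (ZMod p) :=
  Matrix.of fun q vt =>
    (if vt.1 = q.1 then hent p q.2 vt.2 else 0) + (if vt.1 = q.2 then hent p q.1 vt.2 else 0)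

variable {p m : ℕ}

lemma hent_mul_self (a b : Fin m) : hent p a b * hent p a b = 1 := by
  unfold hent; split <;> norm_num

lemma hent_comm (a b : Fin m) : hent p a b = hent p b a := by
  unfold hent; simp [eq_comm]

lemma phi0_symm (a b : Fin m) (vt : Fin m × Fin m) :
    phi0 p m (a, b) vt = phi0 p m (b, a) vt :=
  add_comm _ _

lemma sum_ite_const (c : Prop) [Decidable c] (f : Fin m → ZMod p) :
    ∑ x, (if c then f x else 0) = if c then ∑ x, f x else 0 := by
  split <;> simp

lemma g_eq (hmod : (m : ZMod p) = 4) (a b : Fin m) :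
    ∑ t, hent p a t * hent p b t = if a = b then 4 else 0 := by
  by_cases hab : a = b
  · subst hab
    have h1 : ∀ t, hent p a t * hent p a t = (1 : ZMod p) := fun t => hent_mul_self a t
    simp only [h1, Finset.sum_const, card_univ, Fintype.card_fin, nsmul_eq_mul, mul_one, hmod]
    simp
  · have h1 : ∀ t, hent p a t * hent p b t
        = 1 - (if a = t then 2 else 0) - (if b = t then 2 else 0) := by
      intro t
      unfold hent
      split_ifs with h1 h2 h3 <;> try ring_nf
      · exact absurd (h1.trans h2.symm) hab
    simp only [h1, Finset.sum_sub_distrib, Finset.sum_const, Finset.sum_ite_eq, mem_univ,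
      if_true, card_univ, Fintype.card_fin, nsmul_eq_mul, mul_one, hmod]
    simp [hab]
    norm_num

lemma row_inner (hmod : (m : ZMod p) = 4) {i j k l : Fin m} (hij : i < j) (hkl : k < l) :
    ∑ q : Fin m × Fin m, phi0 p m (i,j) q * phi0 p m (k,l) q
      = if i = k ∧ j = l then 8 else 0 := by
  rw [Fintype.sum_prod_type, Finset.sum_comm]
  simp only [phi0, of_apply, add_mul, mul_add, ite_mul, mul_ite, zero_mul, mul_zero,
    zero_add, add_zero, Finset.sum_add_distrib, Finset.sum_ite_eq', mem_univ, if_true,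
    sum_ite_const, g_eq hmod]
  split_ifs <;> try norm_num
  all_goals (exfalso; simp only [Fin.ext_iff, Fin.lt_def, not_and] at *; omega)

lemma sum_split {M : Type*} [AddCommMonoid M] (F : Fin m × Fin m → M)
    (hsym : ∀ a b : Fin m, F (a,b) = F (b,a)) :
    ∑ q : Fin m × Fin m, F q
      = (∑ i, F (i,i)) + ((∑ e : {q : Fin m × Fin m // q.1 < q.2}, F e.val)
          + ∑ e : {q : Fin m × Fin m // q.1 < q.2}, F e.val) := by
  classical
  have hsub : ∑ e : {q : Fin m × Fin m // q.1 < q.2}, F e.val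
      = ∑ q ∈ univ.filter (fun q : Fin m × Fin m => q.1 < q.2), F q :=
    (Finset.sum_subtype _ (by simp) F).symm
  have hswap : ∑ q ∈ univ.filter (fun q : Fin m × Fin m => ¬ q.1 = q.2 ∧ ¬ q.1 < q.2), F q
      = ∑ q ∈ univ.filter (fun q : Fin m × Fin m => q.1 < q.2), F q := by
    refine Finset.sum_nbij' (fun q => q.swap) (fun q => q.swap) ?_ ?_ ?_ ?_ ?_
    · intro a ha
      simp only [mem_filter, mem_univ, true_and] at *
      obtain ⟨h1, h2⟩ := ha
      exact lt_of_le_of_ne (not_lt.mp h2) (Ne.symm h1)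
    · intro a ha
      simp only [mem_filter, mem_univ, true_and] at *
      exact ⟨ne_of_gt ha, not_lt.mpr (le_of_lt ha)⟩
    · intro a _; simp
    · intro a _; simp
    · intro a _; obtain ⟨x,y⟩ := a; exact hsym x y
  have hdiag : ∑ q ∈ univ.filter (fun q : Fin m × Fin m => q.1 = q.2), F q = ∑ i, F (i,i) := by
    refine Finset.sum_nbij' (fun q => q.1) (fun i => (i,i)) ?_ ?_ ?_ ?_ ?_
    · intro a _; simp
    · intro a _; simp
    · intro a ha; simp only [mem_filter, mem_univ, true_and] at ha
      obtain ⟨x,y⟩ := a; cases ha; rfl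
    · intro a _; rfl
    · intro a ha; simp only [mem_filter, mem_univ, true_and] at ha
      obtain ⟨x,y⟩ := a; cases ha; rfl
  have h1 : univ.filter (fun q : Fin m × Fin m => ¬ q.1 = q.2 ∧ q.1 < q.2)
      = univ.filter (fun q : Fin m × Fin m => q.1 < q.2) := by
    ext q
    simp only [mem_filter, mem_univ, true_and, and_iff_right_iff_imp]
    exact fun h => ne_of_lt h
  rw [← Finset.sum_filter_add_sum_filter_not univ (fun q : Fin m × Fin m => q.1 = q.2) F,
    ← Finset.sum_filter_add_sum_filter_not
      (univ.filter (fun q : Fin m × Fin m => ¬ q.1 = q.2))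
      (fun q : Fin m × Fin m => q.1 < q.2) F,
    Finset.filter_filter, Finset.filter_filter, hdiag, hsub, h1, hswap]

lemma card_E : Fintype.card {q : Fin m × Fin m // q.1 < q.2} = m * (m - 1) / 2 := by
  have key := sum_split (m := m) (fun _ => (1 : ℕ)) (fun _ _ => rfl)
  simp only [Finset.sum_const, card_univ, Fintype.card_prod, Fintype.card_fin, smul_eq_mul,
    mul_one] at key
  -- key : m * m = m + (card E + card E)
  rcases Nat.eq_zero_or_pos m with hm | hm
  · subst hm
    simp_all
  · obtain ⟨n, rfl⟩ : ∃ n, m = n + 1 := ⟨m - 1, by omega⟩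
    have e1 : (n+1) * (n+1) = n * n + 2 * n + 1 := by ring
    have e2 : (n+1) * ((n+1) - 1) = n * n + n := by simp; ring
    omega

lemma col_full (hmod : (m : ZMod p) = 4) (v t w s : Fin m) :
    ∑ q : Fin m × Fin m, phi0 p m q (v,t) * phi0 p m q (w,s)
      = (if v = w then (if t = s then (4 : ZMod p) else 0) else 0) * 2
        + 2 * (hent p w t * hent p v s) := by
  rw [Fintype.sum_prod_type]
  simp only [phi0, of_apply, add_mul, mul_add, ite_mul, mul_ite, zero_mul, mul_zero,
    zero_add, add_zero, Finset.sum_add_distrib, Finset.sum_ite_eq, Finset.sum_ite_eq',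
    mem_univ, if_true, sum_ite_const]
  have hG : (∑ x : Fin m, hent p x t * hent p x s) = if t = s then (4 : ZMod p) else 0 := by
    have h2 : ∀ x : Fin m, hent p x t * hent p x s = hent p t x * hent p s x := by
      intro x; rw [hent_comm x t, hent_comm x s]
    simp only [h2]
    exact g_eq hmod t s
  simp only [hG]
  split_ifs <;> ring

lemma col_diag (v t w s : Fin m) :
    ∑ i, phi0 p m (i,i) (v,t) * phi0 p m (i,i) (w,s)
      = 4 * (if v = w then hent p w t * hent p w s else 0) := by
  simp only [phi0, of_apply, add_mul, mul_add, ite_mul, mul_ite, zero_mul, mul_zero,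
    zero_add, add_zero, Finset.sum_add_distrib, Finset.sum_ite_eq, Finset.sum_ite_eq',
    mem_univ, if_true, sum_ite_const]
  split_ifs <;> ring

lemma col_inner [Fact p.Prime] (hp2 : (2 : ZMod p) ≠ 0) (hmod : (m : ZMod p) = 4) (v t w s : Fin m) :
    (∑ e : {q : Fin m × Fin m // q.1 < q.2}, phi0 p m e.val (v,t) * phi0 p m e.val (w,s))
      = (if v = w then (if t = s then (4 : ZMod p) else 0) else 0)
        + hent p w t * hent p v s
        - 2 * (if v = w then hent p w t * hent p w s else 0) := by
  have key := sum_split (fun q => phi0 p m q (v,t) * phi0 p m q (w,s))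
    (fun a b => by
      show phi0 p m (a,b) (v,t) * phi0 p m (a,b) (w,s)
          = phi0 p m (b,a) (v,t) * phi0 p m (b,a) (w,s)
      rw [phi0_symm a b (v,t), phi0_symm a b (w,s)])
  beta_reduce at key
  rw [col_full hmod, col_diag] at key
  refine mul_left_cancel₀ hp2 ?_
  linear_combination -key

end Stmt19Aux

open Stmt19Aux

/-- Steiner construction over finite fields: for every odd prime `p` and integer `m ≥ 4`
with `m ≡ 4 (mod p)`, there is a `(3,1,8)`-ETF of size `(m(m-1)/2) × m²` in the real model
on `𝔽_p^{m(m-1)/2}`. -/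
theorem stmt_19 (p : ℕ) (hp : p.Prime) (hodd : Odd p)
    (m : ℕ) (hm : 4 ≤ m) (hmod : (m : ZMod p) = 4) :
    ∃ Φ : Matrix (Fin (m * (m - 1) / 2)) (Fin (m ^ 2)) (ZMod p),
      Φ * Φᵀ = (8 : ZMod p) • 1 ∧
      (∀ j, (Φᵀ * Φ) j j = 3) ∧
      (∀ i j, i ≠ j → ((Φᵀ * Φ) i j) ^ 2 = 1) ∧
      Φ.rank = m * (m - 1) / 2 := by
  classical
  haveI : Fact p.Prime := ⟨hp⟩
  -- basic nonvanishing facts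
  have hpne2 : p ≠ 2 := by
    rintro rfl
    simp [Nat.odd_iff] at hodd
  have h2 : (2 : ZMod p) ≠ 0 := by
    intro h
    rw [show ((2 : ZMod p)) = ((2 : ℕ) : ZMod p) by norm_cast,
      ZMod.natCast_eq_zero_iff] at h
    exact hpne2 ((Nat.prime_dvd_prime_iff_eq hp Nat.prime_two).mp h)
  have h8 : (8 : ZMod p) ≠ 0 := by
    have h83 : (8 : ZMod p) = 2 ^ 3 := by norm_num
    rw [h83]
    exact pow_ne_zero _ h2
  -- index equivalences
  let E := {q : Fin m × Fin m // q.1 < q.2}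
  have hcardE : Fintype.card E = m * (m - 1) / 2 := card_E
  let eE : Fin (m * (m - 1) / 2) ≃ E := (Fintype.equivFinOfCardEq hcardE).symm
  have hcardV : Fintype.card (Fin m × Fin m) = m ^ 2 := by
    simp [pow_two]
  let eV : Fin (m ^ 2) ≃ Fin m × Fin m := (Fintype.equivFinOfCardEq hcardV).symm
  -- the frame matrix, with rows restricted to increasing pairs
  let Φ₁ : Matrix E (Fin m × Fin m) (ZMod p) := (phi0 p m).submatrix Subtype.val id
  have P1 : Φ₁ * Φ₁ᵀ = (8 : ZMod p) • 1 := by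
    ext e f
    rw [Matrix.mul_apply]
    simp only [Φ₁, Matrix.transpose_apply, Matrix.submatrix_apply, id_eq]
    obtain ⟨⟨i, j⟩, hij⟩ := e
    obtain ⟨⟨k, l⟩, hkl⟩ := f
    rw [show (∑ x : Fin m × Fin m, phi0 p m (i,j) x * phi0 p m (k,l) x)
        = if i = k ∧ j = l then 8 else 0 from row_inner hmod hij hkl]
    simp only [Matrix.smul_apply, Matrix.one_apply, Subtype.mk.injEq, Prod.mk.injEq,
      smul_eq_mul]
    split_ifs with hc hd hd <;> simp_all
  have P2 : ∀ v t w s : Fin m,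
      (Φ₁ᵀ * Φ₁) (v, t) (w, s)
        = (if v = w then (if t = s then (4 : ZMod p) else 0) else 0)
          + hent p w t * hent p v s
          - 2 * (if v = w then hent p w t * hent p w s else 0) := by
    intro v t w s
    rw [Matrix.mul_apply]
    simp only [Φ₁, Matrix.transpose_apply, Matrix.submatrix_apply, id_eq]
    exact col_inner h2 hmod v t w s
  set Φ : Matrix (Fin (m * (m - 1) / 2)) (Fin (m ^ 2)) (ZMod p) := Φ₁.submatrix eE eV with hΦ
  have hQ : Φ * Φᵀ = (8 : ZMod p) • 1 := by
    rw [hΦ, Matrix.transpose_submatrix, Matrix.submatrix_mul_equiv Φ₁ Φ₁ᵀ _ eV _, P1]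
    ext i j
    simp [Matrix.submatrix_apply, Matrix.smul_apply, Matrix.one_apply,
      EmbeddingLike.apply_eq_iff_eq]
  have hcolmat : Φᵀ * Φ = (Φ₁ᵀ * Φ₁).submatrix eV eV := by
    rw [hΦ, Matrix.transpose_submatrix, Matrix.submatrix_mul_equiv Φ₁ᵀ Φ₁ _ eE _]
  have hsq : ∀ a b : Fin m, hent p a b ^ 2 = (1 : ZMod p) := by
    intro a b; rw [sq]; exact hent_mul_self a b
  refine ⟨Φ, hQ, ?_, ?_, ?_⟩
  · intro j
    rw [hcolmat]
    simp only [Matrix.submatrix_apply]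
    rcases hj : eV j with ⟨v, t⟩
    rw [P2 v t v t]
    simp only [eq_self_iff_true, if_true, hent_mul_self]
    norm_num
  · intro a b hab
    rw [hcolmat]
    simp only [Matrix.submatrix_apply]
    have hne : eV a ≠ eV b := fun h => hab (eV.injective h)
    rcases hva : eV a with ⟨v, t⟩
    rcases hvb : eV b with ⟨w, s⟩
    rw [hva, hvb] at hne
    rw [P2 v t w s]
    by_cases hvw : v = w
    · subst hvw
      have hts : t ≠ s := fun h => hne (by rw [h])
      simp only [eq_self_iff_true, if_true, if_neg hts]
      have e : ((0 : ZMod p) + hent p v t * hent p v s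
            - 2 * (hent p v t * hent p v s)) ^ 2
          = hent p v t ^ 2 * hent p v s ^ 2 := by ring
      rw [e, hsq, hsq, mul_one]
    · simp only [if_neg hvw]
      have e : ((0 : ZMod p) + hent p w t * hent p v s - 2 * 0) ^ 2
          = hent p w t ^ 2 * hent p v s ^ 2 := by ring
      rw [e, hsq, hsq, mul_one]
  · have hle : Φ.rank ≤ m * (m - 1) / 2 := by
      simpa using Φ.rank_le_card_height
    have hunit : IsUnit ((8 : ZMod p)
        • (1 : Matrix (Fin (m * (m - 1) / 2)) (Fin (m * (m - 1) / 2)) (ZMod p))) := by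
      rw [Matrix.isUnit_iff_isUnit_det, Matrix.det_smul, Matrix.det_one, mul_one]
      exact h8.isUnit.pow _
    have hrank8 := Matrix.rank_of_isUnit _ hunit
    have hge := Matrix.rank_mul_le_left Φ Φᵀ
    rw [hQ, hrank8] at hge
    simp only [Fintype.card_fin] at hge
    omega
end
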